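/- arXiv:1401.5868 — 6 statements merged into one kernel-verified Lean document; each statement's English description precedes it below -/
import Mathlib

section
/- Let k be an integer with k > 1. Every level k-matrix with 2 columns and m rows, where m > 2k − 1, is reducible. (I.e., ℓ(2,k) ≤ 2k − 1.) -/
/-- A matrix with nonnegative integer entries is *level* if all of its column sums are equal. -/
def IsLevel {m n : ℕ} (M : Matrix (Fin m) (Fin n) ℕ) : Prop :=
  ∀ j j' : Fin n, ∑ i, M i j = ∑ i, M i j'

/-- A level matrix is *reducible* if there is a nonempty proper subset of its row indices whose
corresponding submatrix (keeping all columns) is level. -/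
def IsReducible {m n : ℕ} (M : Matrix (Fin m) (Fin n) ℕ) : Prop :=
  ∃ S : Finset (Fin m), S.Nonempty ∧ S ≠ Finset.univ ∧
    ∀ j j' : Fin n, ∑ i ∈ S, M i j = ∑ i ∈ S, M i j'

/-!
Put `d i = M i 0 - M i 1 ∈ [-k, k]`; a reducing set of rows is a nonempty proper set of rows on
which `d` sums to zero. If both `k` and `-k` occur, two rows suffice. Otherwise, after possibly
negating `d`, all values lie in `[-k, k - 1]`. Adding the rows one at a time, always choosing a
row of sign opposite to the current partial sum, keeps the partial sums in the `2k - 1` values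
`[1 - k, k - 1]`; among the first `m > 2k - 1` of them two coincide, and the rows added in between
sum to zero.
-/

open Finset

section ZeroSum

variable {ι : Type*} [Fintype ι] [DecidableEq ι] {d : ι → ℤ} {a b : ℤ}

theorem exists_sum_insert_mem_Icc (hd : ∀ i, d i ∈ Icc (-a) b) (hsum : ∑ i, d i = 0)
    {S : Finset ι} (hS : S ≠ univ) (hSd : ∑ i ∈ S, d i ∈ Icc (1 - a) b) :
    ∃ i ∉ S, ∑ j ∈ insert i S, d j ∈ Icc (1 - a) b := by
  have hcompl : ∑ i ∈ Sᶜ, d i = -∑ i ∈ S, d i := by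
    rw [eq_neg_iff_add_eq_zero, sum_compl_add_sum, hsum]
  rw [mem_Icc] at hSd
  rcases lt_or_ge 0 (∑ j ∈ S, d j) with hpos | hnonpos
  · obtain ⟨i, hi, hdi⟩ : ∃ i ∈ Sᶜ, d i < 0 :=
      exists_lt_of_sum_lt (by simpa [hcompl] using hpos)
    refine ⟨i, mem_compl.1 hi, ?_⟩
    rw [sum_insert (mem_compl.1 hi), mem_Icc]
    constructor <;> linarith [mem_Icc.1 (hd i)]
  · have hne : Sᶜ.Nonempty := nonempty_iff_ne_empty.2 (by rwa [Ne, compl_eq_empty_iff])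
    obtain ⟨i, hi, hdi⟩ : ∃ i ∈ Sᶜ, 0 ≤ d i :=
      exists_le_of_sum_le hne (by simpa [hcompl] using hnonpos)
    refine ⟨i, mem_compl.1 hi, ?_⟩
    rw [sum_insert (mem_compl.1 hi), mem_Icc]
    constructor <;> linarith [mem_Icc.1 (hd i)]

theorem exists_chain_sum_mem_Icc (ha : 0 < a) (hb : 0 ≤ b) (hd : ∀ i, d i ∈ Icc (-a) b)
    (hsum : ∑ i, d i = 0) :
    ∃ S : ℕ → Finset ι, Monotone S ∧ (∀ t, #(S t) = min t (Fintype.card ι)) ∧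
      ∀ t, ∑ i ∈ S t, d i ∈ Icc (1 - a) b := by
  let Good := {S : Finset ι // ∑ i ∈ S, d i ∈ Icc (1 - a) b}
  have step : ∀ S : Good, ∃ S' : Good,
      S.1 ⊆ S'.1 ∧ #S'.1 = min (#S.1 + 1) (Fintype.card ι) := by
    intro S
    by_cases hS : S.1 = univ
    · exact ⟨S, subset_rfl, by simp [hS]⟩
    · obtain ⟨i, hi, hins⟩ := exists_sum_insert_mem_Icc hd hsum hS S.2
      have : #S.1 < Fintype.card ι := card_lt_univ_of_notMem hi
      exact ⟨⟨insert i S.1, hins⟩, subset_insert _ _, by rw [card_insert_of_notMem hi]; omega⟩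
  choose next hnext using step
  let empty : Good := ⟨∅, by simp only [sum_empty, mem_Icc]; omega⟩
  refine ⟨fun t ↦ (next^[t] empty).1, monotone_nat_of_le_succ fun t ↦ ?_, fun t ↦ ?_,
    fun t ↦ (next^[t] empty).2⟩
  · rw [Function.iterate_succ_apply']
    exact (hnext _).1
  · induction t with
    | zero => simp [empty]
    | succ t ih =>
      dsimp only at ih ⊢
      rw [Function.iterate_succ_apply', (hnext _).2, ih]
      omega

theorem exists_proper_zero_sum_of_card_gt (ha : 0 < a) (hb : 0 ≤ b)
    (hd : ∀ i, d i ∈ Icc (-a) b) (hsum : ∑ i, d i = 0) (hcard : a + b < Fintype.card ι) :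
    ∃ S : Finset ι, S.Nonempty ∧ S ≠ univ ∧ ∑ i ∈ S, d i = 0 := by
  obtain ⟨S, hmono, hcardS, hSd⟩ := exists_chain_sum_mem_Icc ha hb hd hsum
  set n := Fintype.card ι
  have sdiff_of_lt : ∀ u v, u < v → v < n → ∑ i ∈ S u, d i = ∑ i ∈ S v, d i →
      ∃ T : Finset ι, T.Nonempty ∧ T ≠ univ ∧ ∑ i ∈ T, d i = 0 := by
    intro u v huv hv heq
    have hsub : S u ⊆ S v := hmono huv.le
    have hcardT : #(S v \ S u) = v - u := by
      rw [card_sdiff_of_subset hsub, hcardS, hcardS]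
      omega
    refine ⟨S v \ S u, card_pos.1 (by omega), (card_lt_iff_ne_univ _).1 (by omega), ?_⟩
    rw [sum_sdiff_eq_sub hsub, heq, sub_self]
  have hIcc : #(Icc (1 - a) b) < #(range n) := by
    rw [Int.card_Icc, card_range]
    omega
  obtain ⟨u, hu, v, hv, hne, heq⟩ :=
    exists_ne_map_eq_of_card_lt_of_maps_to hIcc (f := fun t ↦ ∑ i ∈ S t, d i)
      fun t _ ↦ hSd t
  rw [mem_range] at hu hv
  rcases lt_or_gt_of_ne hne with h | h
  · exact sdiff_of_lt u v h hv heq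
  · exact sdiff_of_lt v u h hu heq.symm

theorem exists_proper_zero_sum_of_abs_le (k : ℤ) (hk : 1 < k) (hd : ∀ i, |d i| ≤ k)
    (hsum : ∑ i, d i = 0) (hcard : 2 * k ≤ Fintype.card ι) :
    ∃ S : Finset ι, S.Nonempty ∧ S ≠ univ ∧ ∑ i ∈ S, d i = 0 := by
  by_cases hpair : ∃ i j, d i = k ∧ d j = -k
  · obtain ⟨i, j, hi, hj⟩ := hpair
    have hij : i ≠ j := fun h ↦ by subst h; omega
    refine ⟨{i, j}, insert_nonempty _ _, (card_lt_iff_ne_univ _).1 ?_, ?_⟩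
    · rw [card_pair hij]
      omega
    · rw [sum_pair hij, hi, hj, add_neg_cancel]
  push Not at hpair
  by_cases htop : ∃ i, d i = k
  · obtain ⟨i, hi⟩ := htop
    have hneg : ∀ j, -d j ∈ Icc (-k) (k - 1) := fun j ↦ by
      have := abs_le.1 (hd j); have := hpair i j hi
      rw [mem_Icc]; omega
    obtain ⟨S, hS, hSu, hS0⟩ := exists_proper_zero_sum_of_card_gt (by omega) (by omega) hneg
      (by rw [sum_neg_distrib, hsum, neg_zero]) (by omega)
    exact ⟨S, hS, hSu, by rwa [sum_neg_distrib, neg_eq_zero] at hS0⟩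
  · push Not at htop
    have hle : ∀ j, d j ∈ Icc (-k) (k - 1) := fun j ↦ by
      have := abs_le.1 (hd j); have := htop j
      rw [mem_Icc]; omega
    exact exists_proper_zero_sum_of_card_gt (by omega) (by omega) hle hsum (by omega)

end ZeroSum

theorem isReducible_of_sum_sub_eq_zero {m : ℕ} (M : Matrix (Fin m) (Fin 2) ℕ)
    {S : Finset (Fin m)} (hS : S.Nonempty) (hSu : S ≠ univ)
    (h : ∑ i ∈ S, ((M i 0 : ℤ) - M i 1) = 0) : IsReducible M := by
  have key : ∑ i ∈ S, M i 0 = ∑ i ∈ S, M i 1 := by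
    rw [sum_sub_distrib, sub_eq_zero] at h
    exact_mod_cast h
  refine ⟨S, hS, hSu, fun j j' ↦ ?_⟩
  fin_cases j <;> fin_cases j' <;> simp [key]

/-- Every level `k`-matrix with 2 columns and more than `2k - 1` rows is reducible. -/
theorem level_two_col_reducible (k m : ℕ) (hk : 1 < k) (hm : m > 2 * k - 1)
    (M : Matrix (Fin m) (Fin 2) ℕ) (hent : ∀ i j, M i j ≤ k) (hlev : IsLevel M) :
    IsReducible M := by
  have hd : ∀ i, |(M i 0 : ℤ) - M i 1| ≤ k := fun i ↦ by
    have := hent i 0; have := hent i 1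
    rw [abs_le]; omega
  have hsum : ∑ i, ((M i 0 : ℤ) - M i 1) = 0 := by
    rw [sum_sub_distrib, sub_eq_zero]
    exact_mod_cast hlev 0 1
  obtain ⟨S, hS, hSu, hS0⟩ :=
    exists_proper_zero_sum_of_abs_le (k : ℤ) (by omega) hd hsum (by rw [Fintype.card_fin]; omega)
  exact isReducible_of_sum_sub_eq_zero M hS hSu hS0
end

section
/- For every integer k > 1 there exists an irreducible level k-matrix with 2 columns and exactly 2k − 1 rows. (Together with the reducibility bound, this shows ℓ(2,k) = 2k − 1.) -/
/-- A level matrix is *irreducible* if it is level and not reducible. -/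
def IsIrred {m n : ℕ} (M : Matrix (Fin m) (Fin n) ℕ) : Prop :=
  IsLevel M ∧ ¬ IsReducible M

/-!
Take `k - 1` rows equal to `(k, 0)` followed by `k` rows equal to `(0, k - 1)`. Both column sums
are `k (k - 1)`. A set of rows containing `x` rows of the first kind and `y` of the second is level
iff `k x = (k - 1) y`; since `k` and `k - 1` are coprime, `k - 1 ∣ x ≤ k - 1` and `k ∣ y ≤ k`, which
forces the set to be empty or to contain every row.
-/

open Finset

namespace Nat

theorem eq_zero_or_eq_of_dvd_of_le {a b : ℕ} (hab : a ∣ b) (hb : b ≤ a) : b = 0 ∨ b = a :=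
  (lt_or_eq_of_le hb).imp_left (eq_zero_of_dvd_of_lt hab)

theorem Coprime.eq_zero_or_eq_of_mul_eq_mul {a b x y : ℕ} (hab : Coprime a b)
    (h : a * x = b * y) (hx : x ≤ b) (hy : y ≤ a) : (x = 0 ∧ y = 0) ∨ (x = b ∧ y = a) := by
  have hbx : b ∣ x := hab.symm.dvd_of_dvd_mul_left ⟨y, h⟩
  have hay : a ∣ y := hab.dvd_of_dvd_mul_left ⟨x, h.symm⟩
  rcases eq_zero_or_eq_of_dvd_of_le hbx hx with rfl | rfl <;>
    rcases eq_zero_or_eq_of_dvd_of_le hay hy with rfl | rfl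
  · exact .inl ⟨rfl, rfl⟩
  · rcases Nat.mul_eq_zero.mp h.symm with rfl | rfl <;> simp
  · rcases Nat.mul_eq_zero.mp h with rfl | rfl <;> simp
  · exact .inr ⟨rfl, rfl⟩

end Nat

theorem Fin.card_filter_val_not_lt {n m : ℕ} : #{i : Fin n | ¬ i.val < m} = n - m := by
  have := card_filter_add_card_filter_not (s := (univ : Finset (Fin n))) (fun i => i.val < m)
  rw [card_univ, Fintype.card_fin, Fin.card_filter_val_lt] at this
  omega

def twoBlockMatrix (m t a b : ℕ) : Matrix (Fin m) (Fin 2) ℕ :=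
  fun i => if i.val < t then ![a, 0] else ![0, b]

section twoBlockMatrix

variable {m t a b : ℕ}

theorem twoBlockMatrix_le_max (i : Fin m) (j : Fin 2) : twoBlockMatrix m t a b i j ≤ max a b := by
  unfold twoBlockMatrix
  split_ifs <;> fin_cases j <;> simp

theorem sum_twoBlockMatrix_zero (S : Finset (Fin m)) :
    ∑ i ∈ S, twoBlockMatrix m t a b i 0 = #{i ∈ S | i.val < t} * a := by
  simp [twoBlockMatrix, ite_apply, sum_ite]

theorem sum_twoBlockMatrix_one (S : Finset (Fin m)) :
    ∑ i ∈ S, twoBlockMatrix m t a b i 1 = #{i ∈ S | ¬ i.val < t} * b := by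
  simp [twoBlockMatrix, ite_apply, sum_ite]

theorem isLevel_twoBlockMatrix (hm : m = b + a) : IsLevel (twoBlockMatrix m b a b) := by
  have hsum : ∀ j, ∑ i, twoBlockMatrix m b a b i j = a * b := by
    intro j
    fin_cases j
    · rw [Fin.zero_eta, sum_twoBlockMatrix_zero, Fin.card_filter_val_lt, mul_comm]
      congr 1; omega
    · rw [Fin.mk_one, sum_twoBlockMatrix_one, Fin.card_filter_val_not_lt]
      congr 1; omega
  intro j j'
  rw [hsum, hsum]

theorem isIrred_twoBlockMatrix (hab : Nat.Coprime a b) (hm : m = b + a) :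
    IsIrred (twoBlockMatrix m b a b) := by
  refine ⟨isLevel_twoBlockMatrix hm, ?_⟩
  rintro ⟨S, hne, hS, hlevel⟩
  have hbal := hlevel 0 1
  rw [sum_twoBlockMatrix_zero, sum_twoBlockMatrix_one] at hbal
  have hx : #{i ∈ S | i.val < b} ≤ b :=
    (card_le_card (filter_subset_filter _ (subset_univ S))).trans
      (by rw [Fin.card_filter_val_lt]; omega)
  have hy : #{i ∈ S | ¬ i.val < b} ≤ a :=
    (card_le_card (filter_subset_filter _ (subset_univ S))).trans
      (by rw [Fin.card_filter_val_not_lt]; omega)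
  have hcard := card_filter_add_card_filter_not (s := S) (fun i => i.val < b)
  rcases hab.eq_zero_or_eq_of_mul_eq_mul (by linarith) hx hy with ⟨hx0, hy0⟩ | ⟨hxb, hya⟩
  · exact hne.ne_empty (card_eq_zero.mp (by omega))
  · exact hS (eq_univ_of_card S (by rw [Fintype.card_fin]; omega))

end twoBlockMatrix

/-- For every integer `k > 1` there exists an irreducible level `k`-matrix with 2 columns and
exactly `2k - 1` rows. -/
theorem exists_irreducible_two_col (k : ℕ) (hk : 1 < k) :
    ∃ M : Matrix (Fin (2 * k - 1)) (Fin 2) ℕ,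
      (∀ i j, M i j ≤ k) ∧ IsIrred M := by
  refine ⟨twoBlockMatrix (2 * k - 1) (k - 1) k (k - 1), fun i j => ?_, ?_⟩
  · simpa using twoBlockMatrix_le_max (t := k - 1) (a := k) (b := k - 1) i j
  · exact isIrred_twoBlockMatrix ((Nat.coprime_self_sub_right hk.le).mpr (Nat.coprime_one_right k))
      (by omega)
end

section
/- Let n ≥ 1 and k ≥ 1 be integers, let A be an invertible n×n matrix with integer entries in {0,1,…,k}, and let x ∈ ℚ^n satisfy Aᵀx = 𝟙 (the all-ones vector) with x_i ≥ 0 for all i. Let r be the least positive integer such that r·x has all integer entries. Then the only vectors y ∈ ℤ^n satisfying 0 ≤ y ≤ r·x componentwise and Aᵀy = t·𝟙 for some t ∈ ℤ are y = 0 and y = r·x. (Equivalently, the level matrix L(A, r, x) formed by stacking r·x_i copies of row i of A for each i is irreducible.) -/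
/-!
Since `A` is nonsingular, `Aᵀ` is injective, so `Aᵀy = t𝟙 = t Aᵀx` forces `y = t x`. If `t ≤ 0`
then `0 ≤ y = t x ≤ 0`. If `t > 0`, then `t x = y` is integral, so `r ≤ t` by minimality of `r`,
and hence `r x ≤ t x = y ≤ r x` as `x ≥ 0`.
-/

open Matrix

theorem Matrix.eq_smul_of_vecMul_eq_smul {K m : Type*} [Field K] [Fintype m] [DecidableEq m]
    {A : Matrix m m K} (hA : A.det ≠ 0) {x y v : m → K} {c : K}
    (hx : x ᵥ* A = v) (hy : y ᵥ* A = c • v) : y = c • x :=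
  vecMul_injective_of_isUnit ((isUnit_iff_isUnit_det A).2 hA.isUnit) <| by
    simp only [hy, smul_vecMul, hx]

theorem eq_zero_or_eq_of_eq_intCast_mul_of_le_minimal {ι : Type*} {x : ι → ℚ}
    (hxpos : ∀ i, 0 ≤ x i) {r : ℕ}
    (hrmin : ∀ s : ℕ, 0 < s → (∀ i, ∃ z : ℤ, (s : ℚ) * x i = z) → r ≤ s)
    {y : ι → ℤ} (hy0 : ∀ i, 0 ≤ y i) (hyx : ∀ i, (y i : ℚ) ≤ r * x i)
    {t : ℤ} (hyt : ∀ i, (y i : ℚ) = t * x i) :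
    (∀ i, y i = 0) ∨ ∀ i, (y i : ℚ) = r * x i := by
  rcases le_or_gt t 0 with ht | ht
  · refine Or.inl fun i => le_antisymm ?_ (hy0 i)
    have : (y i : ℚ) ≤ 0 := (hyt i).trans_le <|
      mul_nonpos_of_nonpos_of_nonneg (by exact_mod_cast ht) (hxpos i)
    exact_mod_cast this
  · lift t to ℕ using ht.le
    have hrt : (r : ℚ) ≤ t := by
      exact_mod_cast hrmin t (by exact_mod_cast ht) fun i => ⟨y i, by rw [hyt i]; rfl⟩
    refine Or.inr fun i => le_antisymm (hyx i) ?_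
    rw [hyt i]
    exact mul_le_mul_of_nonneg_right hrt (hxpos i)

theorem level_matrix_from_bfs_irreducible_general (n : ℕ)
    (A : Matrix (Fin n) (Fin n) ℤ) (hdet : A.det ≠ 0)
    (x : Fin n → ℚ) (hxpos : ∀ i, 0 ≤ x i)
    (hx : ∀ j : Fin n, ∑ i, (A i j : ℚ) * x i = 1)
    (r : ℕ)
    (hrmin : ∀ s : ℕ, 0 < s → (∀ i, ∃ z : ℤ, (s : ℚ) * x i = (z : ℚ)) → r ≤ s)
    (y : Fin n → ℤ) (hy0 : ∀ i, 0 ≤ y i) (hyx : ∀ i, (y i : ℚ) ≤ (r : ℚ) * x i)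
    (t : ℤ) (hyt : ∀ j : Fin n, ∑ i, A i j * y i = t) :
    (∀ i, y i = 0) ∨ (∀ i, (y i : ℚ) = (r : ℚ) * x i) := by
  set A' : Matrix (Fin n) (Fin n) ℚ := A.map (↑)
  have hdet' : A'.det ≠ 0 := by
    rw [← Int.cast_det]
    exact_mod_cast hdet
  have hx' : x ᵥ* A' = fun _ => 1 := by
    ext j
    simp only [vecMul, dotProduct, A', Matrix.map_apply, mul_comm (x _), hx j]
  have hy' : (fun i => (y i : ℚ)) ᵥ* A' = (t : ℚ) • fun _ => 1 := by
    ext j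
    simp only [vecMul, dotProduct, A', Matrix.map_apply, Pi.smul_apply, smul_eq_mul, mul_one,
      ← hyt j]
    push_cast
    exact Finset.sum_congr rfl fun i _ => mul_comm _ _
  have hy_eq := Matrix.eq_smul_of_vecMul_eq_smul hdet' hx' hy'
  exact eq_zero_or_eq_of_eq_intCast_mul_of_le_minimal hxpos hrmin hy0 hyx (congrFun hy_eq)

/-- Let `A` be an invertible `n × n` integer matrix with entries in `{0, …, k}`, let
`x ∈ ℚ^n` be nonnegative with `Aᵀx = 𝟙`, and let `r` be the least positive integer such that
`r·x` is integral.  Then the only integer vectors `y` with `0 ≤ y ≤ r·x` and `Aᵀy = t·𝟙` for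
some integer `t` are `y = 0` and `y = r·x`.  (Equivalently, `L(A, r, x)` is irreducible.) -/
theorem level_matrix_from_bfs_irreducible (n k : ℕ) (hn : 1 ≤ n) (hk : 1 ≤ k)
    (A : Matrix (Fin n) (Fin n) ℤ) (hdet : A.det ≠ 0)
    (hent : ∀ i j, 0 ≤ A i j ∧ A i j ≤ (k : ℤ))
    (x : Fin n → ℚ) (hxpos : ∀ i, 0 ≤ x i)
    (hx : ∀ j : Fin n, ∑ i, (A i j : ℚ) * x i = 1)
    (r : ℕ) (hr : 0 < r) (hrx : ∀ i, ∃ z : ℤ, (r : ℚ) * x i = (z : ℚ))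
    (hrmin : ∀ s : ℕ, 0 < s → (∀ i, ∃ z : ℤ, (s : ℚ) * x i = (z : ℚ)) → r ≤ s)
    (y : Fin n → ℤ) (hy0 : ∀ i, 0 ≤ y i) (hyx : ∀ i, (y i : ℚ) ≤ (r : ℚ) * x i)
    (t : ℤ) (hyt : ∀ j : Fin n, ∑ i, A i j * y i = t) :
    (∀ i, y i = 0) ∨ (∀ i, (y i : ℚ) = (r : ℚ) * x i) :=
  level_matrix_from_bfs_irreducible_general n A hdet x hxpos hx r hrmin y hy0 hyx t hyt
end

section
/- Let n > 1 and k ≥ 1 be integers, let A be an invertible n×n matrix with integer entries in {0,1,…,k}, and let y ∈ ℚ^n satisfy Aᵀy = 𝟙 with y_i ≥ 0 for all i. Let r be the least positive integer such that r·y has all integer entries. Then, as real numbers, r·(y_1 + ⋯ + y_n) ≤ (k/2)^{n−1}·(n+1)^{(n+1)/2}. (Equivalently, the irreducible level matrix L(A, r, y) has at most (k/2)^{n−1}(n+1)^{(n+1)/2} rows.) -/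
/-!
By Cramer's rule `det A • y` is integral, so `r ≤ |det A|`. Since `Aᵀ y = 𝟙`, the product
`det A · ∑ yᵢ` is, up to sign, the determinant of `Aᵀ` bordered by a row and a column of ones with
a zero corner. Subtracting `k/2` times the last row from the others and scaling the last row and
column by `k/2` turns this into a matrix whose entries all have absolute value at most `k/2`, while
multiplying the determinant by `(k/2)²`. Hadamard's inequality bounds the determinant of that
`(n+1) × (n+1)` matrix by `((n+1)(k/2)²)^((n+1)/2)`.
-/

open Matrix Finset

theorem Real.prod_le_pow_card_of_sum_le {ι : Type*} [Fintype ι] [Nonempty ι] {z : ι → ℝ}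
    (hz : ∀ i, 0 ≤ z i) {c : ℝ} (h : ∑ i, z i ≤ Fintype.card ι * c) :
    ∏ i, z i ≤ c ^ Fintype.card ι := by
  set N := Fintype.card ι
  have hN : (N : ℝ) ≠ 0 := by positivity
  have amgm : ∏ i, z i ^ (N : ℝ)⁻¹ ≤ c := by
    refine (Real.geom_mean_le_arith_mean_weighted univ (fun _ => (N : ℝ)⁻¹) z
      (fun _ _ => by positivity) (by simp [N, hN]) (fun i _ => hz i)).trans ?_
    rw [← mul_sum, inv_mul_le_iff₀ (by positivity)]
    exact h
  calc ∏ i, z i = (∏ i, z i ^ (N : ℝ)⁻¹) ^ N := by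
        rw [← prod_pow]
        refine prod_congr rfl fun i _ => ?_
        rw [← Real.rpow_mul_natCast (hz i), inv_mul_cancel₀ hN, Real.rpow_one]
    _ ≤ c ^ N := pow_le_pow_left₀ (prod_nonneg fun i _ => Real.rpow_nonneg (hz i) _) amgm N

namespace Matrix

variable {m R : Type*} [Fintype m]

theorem intCast_det_smul_eq_adjugate_mulVec [DecidableEq m] [CommRing R] (A : Matrix m m ℤ)
    {y : m → R} {b : m → ℤ} (h : A.map (Int.cast : ℤ → R) *ᵥ y = fun i => (b i : R)) :
    (A.det : R) • y = fun i => ((A.adjugate *ᵥ b) i : R) := by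
  let f := Int.castRingHom R
  calc (A.det : R) • y = (f.mapMatrix A).adjugate *ᵥ (f.mapMatrix A *ᵥ y) := by
        rw [mulVec_mulVec, adjugate_mul, smul_mulVec, one_mulVec, ← RingHom.map_det]
        rfl
    _ = fun i => ((A.adjugate *ᵥ b) i : R) := by
        ext i
        rw [show f.mapMatrix A *ᵥ y = _ from h, ← RingHom.map_adjugate]
        exact (f.map_mulVec A.adjugate b i).symm

theorem exists_natAbs_det_mul_eq_intCast [DecidableEq m] [CommRing R] (A : Matrix m m ℤ)
    {y : m → R} {b : m → ℤ} (h : A.map (Int.cast : ℤ → R) *ᵥ y = fun i => (b i : R)) (i : m) :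
    ∃ z : ℤ, (A.det.natAbs : R) * y i = z := by
  have hcramer := congrFun (intCast_det_smul_eq_adjugate_mulVec A h) i
  rw [Pi.smul_apply, smul_eq_mul] at hcramer
  rw [Nat.cast_natAbs]
  rcases abs_choice A.det with hd | hd <;> rw [hd]
  · exact ⟨_, hcramer⟩
  · exact ⟨-(A.adjugate *ᵥ b) i, by rw [Int.cast_neg, neg_mul, hcramer, Int.cast_neg]⟩

theorem PosSemidef.det_le_pow_card [DecidableEq m] {G : Matrix m m ℝ} (hG : G.PosSemidef)
    {c : ℝ} (h : ∀ i, G i i ≤ c) : G.det ≤ c ^ Fintype.card m := by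
  cases isEmpty_or_nonempty m
  · simp
  rw [hG.isHermitian.det_eq_prod_eigenvalues]
  refine Real.prod_le_pow_card_of_sum_le (fun i => by simpa using hG.eigenvalues_nonneg i) ?_
  have htrace := hG.isHermitian.trace_eq_sum_eigenvalues
  simp only [RCLike.ofReal_real_eq_id, id] at htrace ⊢
  rw [← htrace, trace, ← nsmul_eq_mul, ← card_univ, ← sum_const]
  exact sum_le_sum fun i _ => h i

/-- Hadamard's inequality. -/
theorem det_sq_le_pow_card [DecidableEq m] (M : Matrix m m ℝ) {c : ℝ}
    (h : ∀ j, ∑ i, M i j ^ 2 ≤ c) : M.det ^ 2 ≤ c ^ Fintype.card m := by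
  have := (posSemidef_conjTranspose_mul_self M).det_le_pow_card fun j => by
    simpa [mul_apply, sq] using h j
  rwa [det_mul, det_conjTranspose, star_trivial, ← sq] at this

def borderConst [Zero R] (M : Matrix m m R) (c : R) : Matrix (m ⊕ Unit) (m ⊕ Unit) R :=
  fromBlocks M (of fun _ _ => c) (of fun _ _ => c) 0

theorem det_borderConst_one_of_mulVec_eq_one [DecidableEq m] {K : Type*} [Field K]
    {M : Matrix m m K} (hM : IsUnit M.det) {y : m → K} (hy : M *ᵥ y = 1) :
    (borderConst M 1).det = -(M.det * ∑ i, y i) := by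
  have : Invertible M := M.invertibleOfIsUnitDet hM
  have hinv : M⁻¹ *ᵥ 1 = y := by
    rw [← hy, mulVec_mulVec, nonsing_inv_mul _ hM, one_mulVec]
  rw [borderConst, det_fromBlocks₁₁, det_unique (_ - _), invOf_eq_nonsing_inv, ← hinv]
  simp only [sub_apply, zero_apply, zero_sub, mul_apply, of_apply, one_mul, mul_one, mulVec,
    dotProduct, Pi.one_apply]
  rw [mul_neg, sum_comm]

theorem det_borderConst_sub_const [DecidableEq m] [CommRing R] (M : Matrix m m R) (c : R) :
    (borderConst (M - of fun _ _ => c) c).det = c ^ 2 * (borderConst M 1).det := by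
  -- subtract `c` times the last row from the others, then scale the last row and column by `c`
  have hfactor : borderConst (M - of fun _ _ => c) c =
      fromBlocks 1 0 0 (c • 1 : Matrix Unit Unit R) * (borderConst M 1 *
        fromBlocks 1 0 (of fun _ _ => -c) (c • 1 : Matrix Unit Unit R)) := by
    ext (i | i) (j | j) <;>
      simp [borderConst, fromBlocks_multiply, mul_apply, one_apply, sub_eq_add_neg, mul_comm]
  rw [hfactor, det_mul, det_mul, det_fromBlocks_zero₂₁, det_fromBlocks_zero₁₂]
  simp only [det_one, one_mul, det_unique, smul_apply, one_apply_eq, smul_eq_mul, mul_one]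
  ring

theorem sum_sq_borderConst_sub_const_le [CommRing R] [LinearOrder R] [IsStrictOrderedRing R]
    {M : Matrix m m R} {c : R} (hM : ∀ i j, (M i j - c) ^ 2 ≤ c ^ 2) (j : m ⊕ Unit) :
    ∑ i, borderConst (M - of fun _ _ => c) c i j ^ 2 ≤ (Fintype.card m + 1) * c ^ 2 := by
  rcases j with j | j <;> simp only [borderConst, Fintype.sum_sum_type, fromBlocks_apply₁₁,
    fromBlocks_apply₂₁, fromBlocks_apply₁₂, fromBlocks_apply₂₂, sub_apply, of_apply, zero_apply]
  · calc ∑ i, (M i j - c) ^ 2 + ∑ _ : Unit, c ^ 2 ≤ ∑ _ : m, c ^ 2 + ∑ _ : Unit, c ^ 2 :=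
          add_le_add_left (sum_le_sum fun i _ => hM i j) _
      _ = (Fintype.card m + 1) * c ^ 2 := by simp [add_mul]
  · simp [add_mul]
    positivity

theorem abs_det_mul_sum_le_of_mulVec_eq_one [DecidableEq m] [Nonempty m] {M : Matrix m m ℝ}
    {k : ℝ} (hk : 0 < k) (hM : ∀ i j, 0 ≤ M i j ∧ M i j ≤ k) (hdet : M.det ≠ 0) {y : m → ℝ}
    (hy : M *ᵥ y = 1) :
    |M.det * ∑ i, y i| ≤ (k / 2) ^ (Fintype.card m - 1) *
      ((Fintype.card m : ℝ) + 1) ^ (((Fintype.card m : ℝ) + 1) / 2) := by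
  set N := Fintype.card m
  set c := k / 2
  set x := M.det * ∑ i, y i
  set P : ℝ := ((N : ℝ) + 1) ^ (((N : ℝ) + 1) / 2)
  have hc : 0 < c := by positivity
  have hP : P ^ 2 = ((N : ℝ) + 1) ^ (N + 1) := by
    rw [← Real.rpow_mul_natCast (by positivity), Nat.cast_ofNat, div_mul_cancel₀ _ two_ne_zero]
    exact_mod_cast Real.rpow_natCast ((N : ℝ) + 1) (N + 1)
  have hcN : c ^ 2 * c ^ (N - 1) = c ^ (N + 1) := by
    rw [← pow_add]
    have : 0 < N := Fintype.card_pos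
    congr 1
    omega
  have hHadamard : (c ^ 2 * x) ^ 2 ≤ ((N + 1) * c ^ 2) ^ (N + 1) := by
    have h := det_sq_le_pow_card _ (sum_sq_borderConst_sub_const_le (c := c) (M := M)
      fun i j => by nlinarith [hM i j, show k = 2 * c by ring])
    rwa [det_borderConst_sub_const,
      det_borderConst_one_of_mulVec_eq_one (isUnit_iff_ne_zero.mpr hdet) hy,
      Fintype.card_sum, Fintype.card_unit, mul_neg, neg_sq] at h
  have : c ^ 2 * |x| ≤ c ^ 2 * (c ^ (N - 1) * P) := by
    rw [← pow_le_pow_iff_left₀ (by positivity) (by positivity) two_ne_zero]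
    calc (c ^ 2 * |x|) ^ 2 = (c ^ 2 * x) ^ 2 := by rw [mul_pow, mul_pow, sq_abs]
      _ ≤ ((N + 1) * c ^ 2) ^ (N + 1) := hHadamard
      _ = (c ^ 2 * (c ^ (N - 1) * P)) ^ 2 := by
          rw [← mul_assoc, hcN, mul_pow _ P, hP, mul_pow, ← pow_mul, ← pow_mul]
          ring
  exact le_of_mul_le_mul_left this (by positivity)

end Matrix

theorem rows_of_L_le_general (n k : ℕ) (hn : 1 < n) (hk : 1 ≤ k)
    (A : Matrix (Fin n) (Fin n) ℤ) (hdet : A.det ≠ 0)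
    (hent : ∀ i j, 0 ≤ A i j ∧ A i j ≤ (k : ℤ))
    (y : Fin n → ℚ) (hypos : ∀ i, 0 ≤ y i)
    (hy : ∀ j : Fin n, ∑ i, (A i j : ℚ) * y i = 1)
    (r : ℕ)
    (hrmin : ∀ s : ℕ, 0 < s → (∀ i, ∃ z : ℤ, (s : ℚ) * y i = (z : ℚ)) → r ≤ s) :
    (r : ℝ) * ∑ i, (y i : ℝ) ≤ ((k : ℝ) / 2) ^ (n - 1) * ((n : ℝ) + 1) ^ (((n : ℝ) + 1) / 2) := by
  have : Nonempty (Fin n) := ⟨⟨0, by omega⟩⟩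
  have hr : r ≤ A.det.natAbs := by
    rw [← det_transpose]
    refine hrmin _ (by simpa using hdet) (Aᵀ.exists_natAbs_det_mul_eq_intCast (b := 1) ?_)
    ext j
    simpa [mulVec, dotProduct] using hy j
  have hyR : Aᵀ.map (Int.cast : ℤ → ℝ) *ᵥ (fun i => (y i : ℝ)) = 1 := by
    ext j
    simpa [mulVec, dotProduct] using congrArg (Rat.cast : ℚ → ℝ) (hy j)
  have hbound := abs_det_mul_sum_le_of_mulVec_eq_one (k := k) (Nat.cast_pos.mpr hk)
    (fun i j => by simp only [map_apply, transpose_apply]; exact_mod_cast hent j i)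
    (by rwa [← Int.cast_det, det_transpose, Int.cast_ne_zero]) hyR
  rw [← Int.cast_det, det_transpose, Fintype.card_fin] at hbound
  have hS : 0 ≤ ∑ i, (y i : ℝ) := sum_nonneg fun i _ => Rat.cast_nonneg.mpr (hypos i)
  calc (r : ℝ) * ∑ i, (y i : ℝ) ≤ |(A.det : ℝ)| * ∑ i, (y i : ℝ) := by
        gcongr
        rw [← Int.cast_abs, ← Int.natCast_natAbs]
        exact_mod_cast hr
    _ = |(A.det : ℝ) * ∑ i, (y i : ℝ)| := by rw [abs_mul, abs_of_nonneg hS]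
    _ ≤ _ := hbound

/-- Let `A` be an invertible `n × n` integer matrix (`n > 1`) with entries in `{0, …, k}`, let
`y ∈ ℚ^n` be nonnegative with `Aᵀy = 𝟙`, and let `r` be the least positive integer such that
`r·y` is integral.  Then `r·(y₁ + ⋯ + yₙ) ≤ (k/2)^(n-1)·(n+1)^((n+1)/2)`, i.e. the irreducible
level matrix `L(A, r, y)` has at most `(k/2)^(n-1)·(n+1)^((n+1)/2)` rows. -/
theorem rows_of_L_le (n k : ℕ) (hn : 1 < n) (hk : 1 ≤ k)
    (A : Matrix (Fin n) (Fin n) ℤ) (hdet : A.det ≠ 0)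
    (hent : ∀ i j, 0 ≤ A i j ∧ A i j ≤ (k : ℤ))
    (y : Fin n → ℚ) (hypos : ∀ i, 0 ≤ y i)
    (hy : ∀ j : Fin n, ∑ i, (A i j : ℚ) * y i = 1)
    (r : ℕ) (hr : 0 < r) (hry : ∀ i, ∃ z : ℤ, (r : ℚ) * y i = (z : ℚ))
    (hrmin : ∀ s : ℕ, 0 < s → (∀ i, ∃ z : ℤ, (s : ℚ) * y i = (z : ℚ)) → r ≤ s) :
    (r : ℝ) * ∑ i, (y i : ℝ) ≤ ((k : ℝ) / 2) ^ (n - 1) * ((n : ℝ) + 1) ^ (((n : ℝ) + 1) / 2) :=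
  rows_of_L_le_general n k hn hk A hdet hent y hypos hy r hrmin
end

section
/- For every real number ε > 0 and every natural number N, there exist an integer n ≥ N and an irreducible level matrix with entries in {0,1}, with n columns and m rows, such that m > exp((1 − ε)·√(n·ln n)). (In particular, ℓ(n,1) > e^{(1−ε)√(n ln n)} for infinitely many n.) -/
/-!
Rows are indexed by the residues `t` mod `2^r`, and each bit position `b < r` contributes two
columns, holding bit `b` of `t` and bit `b` of `t - 1`. Translating `t` and permuting bit
positions show that all columns have the same sum. If the rows in `S` formed a level submatrix,
weighting the two columns of position `b` by `2^b` would give `∑_{t ∈ S} t = ∑_{t ∈ S} (t - 1)`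
with `t - 1` taken mod `2^r`; as `(t - 1) + 1 = t + 2^r·[t = 0]`, this forces
`#S = 2^r·[0 ∈ S]`, so `S` is empty or everything. With `n = 2r` columns this gives
`2^(n/2)` rows, which beats `exp (√(n log n))` because `log n = o(n)`.
-/

open Finset Filter Real

lemma Fin.val_sub_one_add_one {n : ℕ} [NeZero n] (t : Fin n) :
    ((t - 1 : Fin n) : ℕ) + 1 = t + if t = 0 then n else 0 := by
  obtain ⟨k, rfl⟩ := Nat.exists_eq_succ_of_ne_zero (NeZero.ne n)
  rw [Fin.coe_sub_one]
  split_ifs with h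
  · simp [h]
  · have := Fin.pos_iff_ne_zero.mpr h
    omega

lemma Finset.eq_empty_or_univ_of_sum_val_sub_one {n : ℕ} [NeZero n] {S : Finset (Fin n)}
    (h : ∑ t ∈ S, ((t - 1 : Fin n) : ℕ) = ∑ t ∈ S, (t : ℕ)) : S = ∅ ∨ S = univ := by
  have hsum : ∑ t ∈ S, ((t - 1 : Fin n) : ℕ) + #S
      = ∑ t ∈ S, (t : ℕ) + if (0 : Fin n) ∈ S then n else 0 := by
    rw [card_eq_sum_ones, ← sum_add_distrib]
    simp only [Fin.val_sub_one_add_one, sum_add_distrib, sum_ite_eq']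
  rw [h] at hsum
  split_ifs at hsum
  · exact .inr (eq_univ_of_card S (by rw [Fintype.card_fin]; omega))
  · exact .inl (card_eq_zero.mp (by omega))

def digit {r : ℕ} (b : Fin r) (t : Fin (2 ^ r)) : ℕ := finFunctionFinEquiv.symm t b

lemma digit_le_one {r : ℕ} (b : Fin r) (t : Fin (2 ^ r)) : digit b t ≤ 1 :=
  Nat.le_of_lt_succ (finFunctionFinEquiv.symm t b).isLt

lemma sum_digit_mul_two_pow {r : ℕ} (t : Fin (2 ^ r)) : ∑ b, digit b t * 2 ^ (b : ℕ) = t := by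
  have hexpand := finFunctionFinEquiv_apply (finFunctionFinEquiv.symm t)
  rw [Equiv.apply_symm_apply] at hexpand
  exact hexpand.symm

lemma sum_digit_eq_sum_digit {r : ℕ} (b b' : Fin r) :
    ∑ t, digit b t = ∑ t, digit b' t := by
  let swapDigits : (Fin r → Fin 2) ≃ (Fin r → Fin 2) := (Equiv.swap b b').arrowCongr (.refl _)
  calc ∑ t, digit b t = ∑ f : Fin r → Fin 2, (f b : ℕ) :=
        finFunctionFinEquiv.symm.sum_comp fun f => (f b : ℕ)
    _ = ∑ f : Fin r → Fin 2, (swapDigits f b : ℕ) := (swapDigits.sum_comp fun f => (f b : ℕ)).symm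
    _ = ∑ f : Fin r → Fin 2, (f b' : ℕ) := by simp [swapDigits, Equiv.arrowCongr_apply]
    _ = ∑ t, digit b' t := (finFunctionFinEquiv.symm.sum_comp fun f => (f b' : ℕ)).symm

lemma sum_val_eq_of_forall_sum_digit_eq {ι : Type*} {r : ℕ} {S : Finset ι} {f g : ι → Fin (2 ^ r)}
    (h : ∀ b, ∑ i ∈ S, digit b (f i) = ∑ i ∈ S, digit b (g i)) :
    ∑ i ∈ S, (f i : ℕ) = ∑ i ∈ S, (g i : ℕ) := by
  simp only [← sum_digit_mul_two_pow (f _), ← sum_digit_mul_two_pow (g _)]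
  rw [sum_comm, sum_comm (s := S)]
  simp only [← sum_mul, h]

def digitShiftMatrix (r : ℕ) : Matrix (Fin (2 ^ r)) (Fin (2 * r)) ℕ :=
  Matrix.of fun t j =>
    digit (finProdFinEquiv.symm j).2 (if (finProdFinEquiv.symm j).1 = 0 then t else t - 1)

lemma digitShiftMatrix_apply_zero (r : ℕ) (t : Fin (2 ^ r)) (b : Fin r) :
    digitShiftMatrix r t (finProdFinEquiv (0, b)) = digit b t := by
  simp [digitShiftMatrix, -finProdFinEquiv_symm_apply]

lemma digitShiftMatrix_apply_one (r : ℕ) (t : Fin (2 ^ r)) (b : Fin r) :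
    digitShiftMatrix r t (finProdFinEquiv (1, b)) = digit b (t - 1) := by
  simp [digitShiftMatrix, -finProdFinEquiv_symm_apply]

lemma sum_digitShiftMatrix (r : ℕ) (j : Fin (2 * r)) :
    ∑ t, digitShiftMatrix r t j = ∑ t, digit (finProdFinEquiv.symm j).2 t := by
  obtain ⟨⟨k, b⟩, rfl⟩ := finProdFinEquiv.surjective j
  fin_cases k
  · simp [digitShiftMatrix_apply_zero]
  · simpa [digitShiftMatrix_apply_one] using (Equiv.subRight 1).sum_comp (digit b)

lemma isLevel_digitShiftMatrix (r : ℕ) : IsLevel (digitShiftMatrix r) := fun j j' => by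
  rw [sum_digitShiftMatrix, sum_digitShiftMatrix, sum_digit_eq_sum_digit]

lemma not_isReducible_digitShiftMatrix (r : ℕ) : ¬ IsReducible (digitShiftMatrix r) := by
  rintro ⟨S, hne, hS, hlevel⟩
  have hdigit (b : Fin r) : ∑ t ∈ S, digit b (t - 1) = ∑ t ∈ S, digit b t := by
    simpa [digitShiftMatrix_apply_zero, digitShiftMatrix_apply_one] using
      hlevel (finProdFinEquiv (1, b)) (finProdFinEquiv (0, b))
  rcases eq_empty_or_univ_of_sum_val_sub_one (sum_val_eq_of_forall_sum_digit_eq hdigit) with h | h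
  · exact hne.ne_empty h
  · exact hS h

lemma isIrred_digitShiftMatrix (r : ℕ) : IsIrred (digitShiftMatrix r) :=
  ⟨isLevel_digitShiftMatrix r, not_isReducible_digitShiftMatrix r⟩

lemma eventually_sqrt_mul_log_lt : ∀ᶠ x : ℝ in atTop, √(x * log x) < x * log 2 / 2 := by
  have hlog2 : 0 < log 2 := log_pos one_lt_two
  filter_upwards [isLittleO_log_id_atTop.def (by positivity : 0 < log 2 ^ 2 / 8),
    eventually_gt_atTop 0] with x hlog hx
  rw [sqrt_lt' (by positivity)]
  simp only [norm_eq_abs, id, abs_of_pos hx] at hlog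
  have hxlog : x * log x ≤ x * (log 2 ^ 2 / 8 * x) :=
    mul_le_mul_of_nonneg_left ((le_abs_self _).trans hlog) hx.le
  nlinarith [mul_pos (mul_pos hx hx) (pow_pos hlog2 2)]

/-- For every `ε > 0` and every `N`, there is an `n ≥ N` and an irreducible level `1`-matrix
with `n` columns and `m > exp((1 − ε)·√(n·ln n))` rows. -/
theorem lower_bound (ε : ℝ) (hε : 0 < ε) (N : ℕ) :
    ∃ n : ℕ, N ≤ n ∧ ∃ m : ℕ, ∃ M : Matrix (Fin m) (Fin n) ℕ,
      (∀ i j, M i j ≤ 1) ∧ IsIrred M ∧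
      (m : ℝ) > Real.exp ((1 - ε) * Real.sqrt ((n : ℝ) * Real.log (n : ℝ))) := by
  obtain ⟨n₀, hn₀⟩ :=
    eventually_atTop.mp (tendsto_natCast_atTop_atTop.eventually eventually_sqrt_mul_log_lt)
  set r := max N n₀
  refine ⟨2 * r, by omega, 2 ^ r, digitShiftMatrix r, fun _ _ => digit_le_one _ _,
    isIrred_digitShiftMatrix r, ?_⟩
  rw [gt_iff_lt, Nat.cast_pow, Nat.cast_ofNat]
  calc exp ((1 - ε) * √((2 * r : ℕ) * log (2 * r : ℕ)))
      ≤ exp √((2 * r : ℕ) * log (2 * r : ℕ)) :=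
        exp_le_exp.mpr (mul_le_of_le_one_left (sqrt_nonneg _) (by linarith))
    _ < exp ((2 * r : ℕ) * log 2 / 2) := exp_lt_exp.mpr (hn₀ _ (by omega))
    _ = 2 ^ r := by
        rw [show ((2 * r : ℕ) : ℝ) * log 2 / 2 = r * log 2 by push_cast; ring, exp_nat_mul,
          exp_log two_pos]
end

section
/- Let p_1 < p_2 < ⋯ < p_t be distinct primes (t ≥ 1), let P = p_1·p_2⋯p_t, and set r_i = p_i + 1 and n = r_1 + ⋯ + r_t. Index the columns by pairs (i, j) with 1 ≤ i ≤ t and 1 ≤ j ≤ r_i, and index the rows by triples (i, c, j) with 1 ≤ i ≤ t, 1 ≤ c ≤ P/p_i, and 1 ≤ j ≤ r_i. Let A* be the 0/1 matrix whose row (i, c, j) has entry 1 in column (i', j') if and only if i' = i and j' ≠ j, and entry 0 otherwise (i.e., for each i, it stacks P/p_i copies of each row of the r_i × r_i matrix J_{r_i} having 0's on the diagonal and 1's elsewhere, in block-diagonal column positions). Then A* is a level matrix with every column sum equal to P, it has m = Σ_{i=1}^t (P/p_i)(p_i + 1) rows and n columns, and A* is irreducible. -/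
/-! If every column of a set `S` of rows sums to `K`, then column `(i, j)` counts the rows of `S`
in block `i` minus those with label `j`; hence every label occurs equally often in block `i`,
say `sᵢ` times, and `K = pᵢ sᵢ`. So every `pᵢ` divides `K`, while `sᵢ ≤ P / pᵢ` gives `K ≤ P`.
Thus `K = 0`, making every `sᵢ = 0` and `S` empty, or `K = P`, making every `sᵢ = P / pᵢ`
and `S` the set of all rows. -/

/-- A matrix (over arbitrary finite index types) with nonnegative integer entries is *level* if
all of its column sums are equal. -/
def IsLevelG {α β : Type*} [Fintype α] (M : Matrix α β ℕ) : Prop :=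
  ∀ j j' : β, ∑ i, M i j = ∑ i, M i j'

/-- A level matrix is *reducible* if there is a nonempty proper subset of its row indices whose
corresponding submatrix (keeping all columns) is level. -/
def IsReducibleG {α β : Type*} [Fintype α] (M : Matrix α β ℕ) : Prop :=
  ∃ S : Finset α, S.Nonempty ∧ S ≠ Finset.univ ∧
    ∀ j j' : β, ∑ i ∈ S, M i j = ∑ i ∈ S, M i j'

/-- A level matrix is *irreducible* if it is level and not reducible. -/
def IsIrredG {α β : Type*} [Fintype α] (M : Matrix α β ℕ) : Prop :=
  IsLevelG M ∧ ¬ IsReducibleG M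

open Finset

section BlockOffDiag
variable {ι : Type*} [DecidableEq ι] (m n : ι → ℕ)

def blockOffDiag : Matrix ((i : ι) × (Fin (m i) × Fin (n i))) ((i : ι) × Fin (n i)) ℕ :=
  fun r c => if c.1 = r.1 ∧ (c.2 : ℕ) ≠ (r.2.2 : ℕ) then 1 else 0

variable {m n}

def labelCount (S : Finset ((i : ι) × (Fin (m i) × Fin (n i)))) (i : ι) (v : ℕ) : ℕ :=
  #{r ∈ S | r.1 = i ∧ (r.2.2 : ℕ) = v}

theorem sum_blockOffDiag_add_labelCount (S : Finset ((i : ι) × (Fin (m i) × Fin (n i))))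
    (i : ι) (j : Fin (n i)) :
    ∑ r ∈ S, blockOffDiag m n r ⟨i, j⟩ + labelCount S i j = #{r ∈ S | r.1 = i} := by
  unfold blockOffDiag
  rw [sum_boole, labelCount, add_comm,
    ← card_filter_add_card_filter_not (s := {r ∈ S | r.1 = i}) (fun r => (r.2.2 : ℕ) = j)]
  simp only [filter_filter, Nat.cast_id]
  congr 3
  ext r
  constructor <;> rintro ⟨rfl, h⟩ <;> exact ⟨rfl, Ne.symm h⟩

theorem card_filter_fst_eq_sum_labelCount (S : Finset ((i : ι) × (Fin (m i) × Fin (n i))))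
    (i : ι) : #{r ∈ S | r.1 = i} = ∑ v ∈ range (n i), labelCount S i v := by
  rw [card_eq_sum_card_fiberwise (f := fun r => (r.2.2 : ℕ)) (t := range (n i))]
  · simp only [labelCount, filter_filter]
  · rintro ⟨i', c, j⟩ h
    obtain ⟨-, rfl⟩ := mem_filter.mp h
    exact mem_range.mpr j.isLt

theorem labelCount_univ [Fintype ι] (i : ι) {v : ℕ} (hv : v < n i) :
    labelCount (univ : Finset ((i : ι) × (Fin (m i) × Fin (n i)))) i v = m i := by
  have : ({r | r.1 = i ∧ (r.2.2 : ℕ) = v} : Finset ((i : ι) × (Fin (m i) × Fin (n i)))) =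
      univ.map ⟨fun c => ⟨i, c, ⟨v, hv⟩⟩, fun c c' h => by simpa using h⟩ := by
    ext ⟨i', c, j⟩
    simp only [mem_filter, mem_univ, true_and, mem_map]
    constructor
    · rintro ⟨rfl, rfl⟩
      exact ⟨c, rfl⟩
    · rintro ⟨c', h⟩
      cases h
      exact ⟨rfl, rfl⟩
  rw [labelCount, this, card_map, card_univ, Fintype.card_fin]

theorem card_filter_fst_univ [Fintype ι] (i : ι) :
    #{r : (i : ι) × (Fin (m i) × Fin (n i)) | r.1 = i} = n i * m i := by
  rw [card_filter_fst_eq_sum_labelCount, sum_const_nat fun v (hv : v ∈ range (n i)) =>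
    labelCount_univ (m := m) i (mem_range.mp hv), card_range]

theorem sum_blockOffDiag_col [Fintype ι] (i : ι) (j : Fin (n i)) :
    ∑ r, blockOffDiag m n r ⟨i, j⟩ = m i * (n i - 1) := by
  have h := sum_blockOffDiag_add_labelCount (m := m) univ i j
  rw [labelCount_univ i j.isLt, card_filter_fst_univ] at h
  rw [Nat.mul_sub_one, mul_comm]
  omega

theorem labelCount_le [Fintype ι] (S : Finset ((i : ι) × (Fin (m i) × Fin (n i)))) (i : ι)
    {v : ℕ} (hv : v < n i) : labelCount S i v ≤ m i :=
  labelCount_univ (m := m) i hv ▸ card_le_card (filter_subset_filter _ (subset_univ S))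

section LevelSubset

variable {S : Finset ((i : ι) × (Fin (m i) × Fin (n i)))} {K : ℕ}
  (hS : ∀ c, ∑ r ∈ S, blockOffDiag m n r c = K)
include hS

theorem labelCount_add_eq_card_filter_fst (i : ι) {v : ℕ} (hv : v < n i) :
    labelCount S i v + K = #{r ∈ S | r.1 = i} := by
  rw [← hS ⟨i, ⟨v, hv⟩⟩, add_comm]
  exact sum_blockOffDiag_add_labelCount S i ⟨v, hv⟩

theorem labelCount_eq_labelCount_zero (i : ι) {v : ℕ} (hv : v < n i) :
    labelCount S i v = labelCount S i 0 := by
  have h₁ := labelCount_add_eq_card_filter_fst hS i hv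
  have h₂ := labelCount_add_eq_card_filter_fst hS i (v.zero_le.trans_lt hv)
  omega

theorem card_filter_fst_eq_mul_labelCount_zero (i : ι) :
    #{r ∈ S | r.1 = i} = n i * labelCount S i 0 := by
  rw [card_filter_fst_eq_sum_labelCount, sum_const_nat fun v hv =>
    labelCount_eq_labelCount_zero hS i (mem_range.mp hv), card_range]

theorem eq_mul_labelCount_zero (i : ι) (hn : 0 < n i) :
    K = (n i - 1) * labelCount S i 0 := by
  have h₁ := labelCount_add_eq_card_filter_fst hS i hn
  rw [card_filter_fst_eq_mul_labelCount_zero hS] at h₁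
  rw [Nat.sub_one_mul]
  omega

theorem eq_empty_of_labelCount_zero_eq_zero (h : ∀ i, labelCount S i 0 = 0) : S = ∅ := by
  refine eq_empty_of_forall_notMem fun r hr => ?_
  have hcard := card_filter_fst_eq_mul_labelCount_zero hS r.1
  rw [h, mul_zero, card_eq_zero, filter_eq_empty_iff] at hcard
  exact hcard hr rfl

theorem eq_univ_of_labelCount_zero_eq [Fintype ι] (h : ∀ i, labelCount S i 0 = m i) :
    S = univ := by
  refine eq_univ_of_forall fun r => ?_
  by_contra hr
  have hlt : labelCount S r.1 r.2.2 < labelCount univ r.1 r.2.2 :=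
    card_lt_card <| (ssubset_iff_of_subset (filter_subset_filter _ (subset_univ S))).mpr
      ⟨r, by simp, by simp [hr]⟩
  rw [labelCount_univ r.1 r.2.2.isLt, labelCount_eq_labelCount_zero hS r.1 r.2.2.isLt, h] at hlt
  exact lt_irrefl _ hlt

end LevelSubset

end BlockOffDiag

theorem eq_zero_or_eq_prod_of_forall_prime_dvd {ι : Type*} [Fintype ι] {p : ι → ℕ}
    (hp : ∀ i, (p i).Prime) (hinj : Function.Injective p) {K : ℕ} (hdvd : ∀ i, p i ∣ K)
    (hle : K ≤ ∏ i, p i) : K = 0 ∨ K = ∏ i, p i := by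
  have hprod : ∏ i, p i ∣ K := by
    rw [show ∏ i, p i = ∏ q ∈ univ.map ⟨p, hinj⟩, q from
      (prod_map univ ⟨p, hinj⟩ fun q => q).symm]
    exact prod_primes_dvd K (by simpa using fun i => (hp i).prime) (by simpa using hdvd)
  rcases K.eq_zero_or_pos with h | h
  · exact .inl h
  · exact .inr (le_antisymm hle (Nat.le_of_dvd h hprod))

theorem not_isReducibleG_blockOffDiag_primes {ι : Type*} [Fintype ι] [DecidableEq ι]
    {p : ι → ℕ} (hp : ∀ i, (p i).Prime) (hinj : Function.Injective p) :
    ¬ IsReducibleG (blockOffDiag (fun i => (∏ j, p j) / p i) (fun i => p i + 1)) := by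
  set P := ∏ j, p j
  rintro ⟨S, ⟨r, hr⟩, hSuniv, hlev⟩
  obtain ⟨K, hS⟩ :
      ∃ K, ∀ c, ∑ x ∈ S, blockOffDiag (fun i => P / p i) (fun i => p i + 1) x c = K :=
    ⟨_, fun c => hlev c ⟨r.1, 0⟩⟩
  have hK : ∀ i, K = p i * labelCount S i 0 := fun i => by
    simpa using eq_mul_labelCount_zero hS i (Nat.succ_pos _)
  have hcopies : ∀ i, p i * (P / p i) = P := fun i =>
    Nat.mul_div_cancel' (dvd_prod_of_mem p (mem_univ i))
  have hle : K ≤ P := (hK r.1).trans_le <|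
    (Nat.mul_le_mul_left _ (labelCount_le S r.1 (Nat.succ_pos _))).trans (hcopies r.1).le
  rcases eq_zero_or_eq_prod_of_forall_prime_dvd hp hinj (fun i => ⟨_, hK i⟩) hle with h0 | hP
  · have hempty := eq_empty_of_labelCount_zero_eq_zero hS fun i =>
      (Nat.mul_eq_zero.mp ((hK i).symm.trans h0)).resolve_left (hp i).ne_zero
    exact notMem_empty r (hempty ▸ hr)
  · exact hSuniv <| eq_univ_of_labelCount_zero_eq hS fun i =>
      Nat.eq_of_mul_eq_mul_left (hp i).pos ((hK i).symm.trans (hP.trans (hcopies i).symm))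

theorem block_prime_matrix_irreducible_general (t : ℕ)
    (p : Fin t → ℕ) (hp : ∀ i, (p i).Prime) (hmono : StrictMono p)
    (P : ℕ) (hP : P = ∏ i, p i) :
    let Astar : Matrix ((i : Fin t) × (Fin (P / p i) × Fin (p i + 1)))
        ((i : Fin t) × Fin (p i + 1)) ℕ :=
      fun r c => if c.1 = r.1 ∧ (c.2 : ℕ) ≠ (r.2.2 : ℕ) then 1 else 0
    (∀ c, ∑ r, Astar r c = P) ∧
    Fintype.card ((i : Fin t) × (Fin (P / p i) × Fin (p i + 1)))
      = ∑ i, (P / p i) * (p i + 1) ∧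
    Fintype.card ((i : Fin t) × Fin (p i + 1)) = ∑ i, (p i + 1) ∧
    IsIrredG Astar := by
  intro Astar
  have hcol : ∀ c, ∑ r, Astar r c = P := fun ⟨i, j⟩ =>
    (sum_blockOffDiag_col (m := fun i => P / p i) (n := fun i => p i + 1) i j).trans <| by
      rw [Nat.add_sub_cancel, Nat.div_mul_cancel (hP ▸ dvd_prod_of_mem p (mem_univ i))]
  refine ⟨hcol, by simp, by simp, fun c c' => (hcol c).trans (hcol c').symm, ?_⟩
  subst hP
  exact not_isReducibleG_blockOffDiag_primes hp hmono.injective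

/-- For distinct primes `p 0 < p 1 < ⋯ < p (t-1)` with product `P`, the matrix `A*` obtained by
stacking, for each `i`, `P / p i` copies of each row of the `(p i + 1) × (p i + 1)` matrix
`J_{p i + 1}` (zeros on the diagonal, ones elsewhere) in block-diagonal column positions is a
level matrix with all column sums equal to `P`; it has `∑ i, (P / p i) * (p i + 1)` rows and
`∑ i, (p i + 1)` columns, and it is irreducible. -/
theorem block_prime_matrix_irreducible (t : ℕ) (ht : 1 ≤ t)
    (p : Fin t → ℕ) (hp : ∀ i, (p i).Prime) (hmono : StrictMono p)
    (P : ℕ) (hP : P = ∏ i, p i) :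
    let Astar : Matrix ((i : Fin t) × (Fin (P / p i) × Fin (p i + 1)))
        ((i : Fin t) × Fin (p i + 1)) ℕ :=
      fun r c => if c.1 = r.1 ∧ (c.2 : ℕ) ≠ (r.2.2 : ℕ) then 1 else 0
    (∀ c, ∑ r, Astar r c = P) ∧
    Fintype.card ((i : Fin t) × (Fin (P / p i) × Fin (p i + 1)))
      = ∑ i, (P / p i) * (p i + 1) ∧
    Fintype.card ((i : Fin t) × Fin (p i + 1)) = ∑ i, (p i + 1) ∧
    IsIrredG Astar :=
  block_prime_matrix_irreducible_general t p hp hmono P hP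
end
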